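/- Let w be a finite set of bimodal formulas and (w̃ᵢ)_{i≥0} an infinite sequence of finite sets with w̃ᵢ ∈ CCS(□ₐ⁻⁴(w) ∪ □_b⁻⁴(w̃_{i+1})) for all i ≥ 0 (an ∞-window for w with transitive unboxings). Then there exists an index i₀ such that □_b⁻⁴(w̃ᵢ) = □_b⁻⁴(w̃_j) for all i, j ≥ i₀, and □_b⁻⁴(w̃ᵢ) ⊆ w̃ᵢ for all i ≥ i₀. -/
import Mathlib


/-- Bimodal formulas over a countable set of atoms. -/
inductive Fm : Type
  | atom : ℕ → Fm
  | bot  : Fm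
  | neg  : Fm → Fm
  | conj : Fm → Fm → Fm
  | boxa : Fm → Fm
  | boxb : Fm → Fm
deriving DecidableEq

open Fm

/-- Modal degree (maximal nesting depth of the modal operators). -/
def deg : Fm → ℕ
  | .atom _ => 0
  | .bot => 0
  | .neg φ => deg φ
  | .conj φ ψ => max (deg φ) (deg ψ)
  | .boxa φ => deg φ + 1
  | .boxb φ => deg φ + 1

/-- Degree of a finite set of formulas (0 for the empty set). -/
def degS (w : Finset Fm) : ℕ := w.sup deg

/-- `CSF w`: least set of formulas containing `w` and closed under the
classical saturation rules. -/
inductive CSF (w : Finset Fm) : Fm → Prop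
  | base {φ} : φ ∈ w → CSF w φ
  | andl {φ ψ} : CSF w (conj φ ψ) → CSF w φ
  | andr {φ ψ} : CSF w (conj φ ψ) → CSF w ψ
  | nandl {φ ψ} : CSF w (neg (conj φ ψ)) → CSF w (neg φ)
  | nandr {φ ψ} : CSF w (neg (conj φ ψ)) → CSF w (neg ψ)
  | negE {φ} : CSF w (neg φ) → CSF w φ

/-- `CCS u`: the set of consistent classical saturations of `u`. -/
def CCS (u : Finset Fm) : Set (Finset Fm) :=
  { w | u ⊆ w ∧ (∀ φ ∈ w, CSF u φ) ∧
    (∀ φ ψ : Fm, conj φ ψ ∈ w → φ ∈ w ∧ ψ ∈ w) ∧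
    (∀ φ ψ : Fm, neg (conj φ ψ) ∈ w → neg φ ∈ w ∨ neg ψ ∈ w) ∧
    (∀ φ : Fm, neg (neg φ) ∈ w → φ ∈ w) ∧
    bot ∉ w ∧
    (∀ φ : Fm, neg φ ∈ w → φ ∉ w) }

/-- Plain unboxing `□ₐ⁻(w) = {φ : □ₐφ ∈ w}`. -/
def unboxa (w : Finset Fm) : Finset Fm :=
  w.biUnion (fun φ => match φ with | .boxa ψ => {ψ} | _ => ∅)

/-- Plain unboxing `□_b⁻(w) = {φ : □_bφ ∈ w}`. -/
def unboxb (w : Finset Fm) : Finset Fm :=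
  w.biUnion (fun φ => match φ with | .boxb ψ => {ψ} | _ => ∅)

/-- Transitive unboxing `□ₐ⁻⁴(w) = {φ, □ₐφ : □ₐφ ∈ w}`. -/
def unboxa4 (w : Finset Fm) : Finset Fm :=
  w.biUnion (fun φ => match φ with | .boxa ψ => {ψ, .boxa ψ} | _ => ∅)

/-- Transitive unboxing `□_b⁻⁴(w) = {φ, □_bφ : □_bφ ∈ w}`. -/
def unboxb4 (w : Finset Fm) : Finset Fm :=
  w.biUnion (fun φ => match φ with | .boxb ψ => {ψ, .boxb ψ} | _ => ∅)

/-- Standard Kripke satisfaction in a bimodal model `(W, Ra, Rb, V)`. -/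
def Sat {W : Type} (Ra Rb : W → W → Prop) (V : ℕ → W → Prop) : W → Fm → Prop
  | x, .atom p => V p x
  | _, .bot => False
  | x, .neg φ => ¬ Sat Ra Rb V x φ
  | x, .conj φ ψ => Sat Ra Rb V x φ ∧ Sat Ra Rb V x ψ
  | x, .boxa φ => ∀ y, Ra x y → Sat Ra Rb V y φ
  | x, .boxb φ => ∀ y, Rb x y → Sat Ra Rb V y φ

/-- `(ws 0, …, ws k)` is a `k`-window for `w`. -/
def IsWindow (w : Finset Fm) (k : ℕ) (ws : ℕ → Finset Fm) : Prop :=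
  ws k ∈ CCS (unboxa w) ∧ ∀ i < k, ws i ∈ CCS (unboxa w ∪ unboxb (ws (i + 1)))

lemma mem_unboxb4 {S : Finset Fm} {φ : Fm} :
    φ ∈ unboxb4 S ↔ ∃ ψ, Fm.boxb ψ ∈ S ∧ (φ = ψ ∨ φ = Fm.boxb ψ) := by
  unfold unboxb4
  simp only [Finset.mem_biUnion]
  constructor
  · rintro ⟨χ, hχ, h⟩
    cases χ <;> simp_all [Finset.mem_insert]
    exact ⟨_, hχ, h⟩
  · rintro ⟨ψ, hψ, h⟩
    exact ⟨Fm.boxb ψ, hψ, by simp [Finset.mem_insert]; tauto⟩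

lemma boxb_mem_unboxb4 {S : Finset Fm} {ψ : Fm} (h : Fm.boxb ψ ∈ S) :
    ψ ∈ unboxb4 S ∧ Fm.boxb ψ ∈ unboxb4 S :=
  ⟨mem_unboxb4.2 ⟨ψ, h, Or.inl rfl⟩, mem_unboxb4.2 ⟨ψ, h, Or.inr rfl⟩⟩

theorem stmt14' (w : Finset Fm) (tw : ℕ → Finset Fm)
    (hwin : ∀ i, tw i ∈ CCS (unboxa4 w ∪ unboxb4 (tw (i + 1)))) :
    ∃ i₀ : ℕ,
      (∀ i j, i₀ ≤ i → i₀ ≤ j → unboxb4 (tw i) = unboxb4 (tw j)) ∧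
      (∀ i, i₀ ≤ i → unboxb4 (tw i) ⊆ tw i) := by
  have hA : ∀ i, unboxb4 (tw (i + 1)) ⊆ tw i := fun i =>
    (Finset.union_subset_iff.1 (hwin i).1).2
  have hB : ∀ i, unboxb4 (tw (i + 1)) ⊆ unboxb4 (tw i) := by
    intro i φ hφ
    obtain ⟨ψ, hψ, hc⟩ := mem_unboxb4.1 hφ
    have hb : Fm.boxb ψ ∈ tw i := hA i (boxb_mem_unboxb4 hψ).2
    exact mem_unboxb4.2 ⟨ψ, hb, hc⟩
  -- cardinalities form an antitone ℕ-sequence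
  set f : ℕ → ℕ := fun i => (unboxb4 (tw i)).card with hf
  have hmono : ∀ i j, i ≤ j → unboxb4 (tw j) ⊆ unboxb4 (tw i) := by
    intro i j hij
    induction j with
    | zero => simp_all
    | succ n ih =>
      rcases Nat.lt_or_ge i (n+1) with h | h
      · exact (hB n).trans (ih (Nat.lt_succ_iff.1 h))
      · have : i = n + 1 := le_antisymm hij h
        subst this; exact subset_rfl
  have hfmono : ∀ i j, i ≤ j → f j ≤ f i := fun i j hij =>
    Finset.card_le_card (hmono i j hij)
  obtain ⟨i₀, hi₀⟩ : ∃ i₀, f i₀ = sInf (Set.range f) :=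
    Nat.sInf_mem (Set.range_nonempty f)
  have hconst : ∀ i, i₀ ≤ i → unboxb4 (tw i) = unboxb4 (tw i₀) := by
    intro i hi
    apply Finset.eq_of_subset_of_card_le (hmono i₀ i hi)
    show f i₀ ≤ f i
    exact le_of_eq_of_le hi₀ (Nat.sInf_le ⟨i, rfl⟩)
  refine ⟨i₀, fun i j hi hj => (hconst i hi).trans (hconst j hj).symm, ?_⟩
  intro i hi
  have : unboxb4 (tw i) = unboxb4 (tw (i+1)) :=
    (hconst i hi).trans (hconst (i+1) (hi.trans (Nat.le_succ i))).symm
  rw [this]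
  exact hA i

/-- along an ∞-window for `w` with transitive unboxings, the
transitive `b`-unboxings eventually stabilize, and from that point on
`□_b⁻⁴(w̃ᵢ) ⊆ w̃ᵢ`. -/
theorem stmt14 (w : Finset Fm) (tw : ℕ → Finset Fm)
    (hwin : ∀ i, tw i ∈ CCS (unboxa4 w ∪ unboxb4 (tw (i + 1)))) :
    ∃ i₀ : ℕ,
      (∀ i j, i₀ ≤ i → i₀ ≤ j → unboxb4 (tw i) = unboxb4 (tw j)) ∧
      (∀ i, i₀ ≤ i → unboxb4 (tw i) ⊆ tw i) := stmt14' w tw hwin
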